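/- arXiv:math/0702382 — 8 statements merged into one kernel-verified Lean document; each statement's English description precedes it below -/
import Mathlib

section
/- Let a = 31207386885274502188173522132023665167365193670823768234185354856354918873864275 and M = 36812852443922071184402498913076070503146229820861211558347078871354783744850778. Then for every integer x with x ≡ a (mod M) and every n ∈ ℕ, the integer x² − F_{3n}/2 has at least two distinct prime divisors (i.e., there exist primes p ≠ q with p ∣ x² − F_{3n}/2 and q ∣ x² − F_{3n}/2). -/
set_option maxRecDepth 40000
set_option maxHeartbeats 4000000

def AN : ℕ := 31207386885274502188173522132023665167365193670823768234185354856354918873864275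
def MN : ℕ := 36812852443922071184402498913076070503146229820861211558347078871354783744850778
def NN : ℕ := 2 * MN

def step (s : ℕ × ℕ) : ℕ × ℕ := ((s.1 + 2 * s.2) % NN, (2 * s.1 + 3 * s.2) % NN)

def powMod (b : ℕ) : ℕ → ℕ → ℕ
  | 0, m => 1 % m
  | e+1, m => (b * powMod b e m) % m

def P25 : List ℕ := [11, 19, 29, 31, 71, 181, 211, 271, 379, 541, 631, 811, 911, 1009, 5779, 17011, 21211, 31249, 42391, 69931, 85429, 119611, 767131, 912871, 2]

def check1 : ℕ × ℕ × ℕ → ℕ × ℕ → Bool := fun e s =>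
  decide (2 ∣ s.1) && decide (e.1 ∣ MN) && decide (e.2.1 ∣ MN) &&
  decide (e.1 ∣ (AN * AN % MN + (MN - s.1 / 2 % MN)) % MN) &&
  decide (powMod e.1 e.2.2 e.2.1 = 1 % e.2.1) &&
  decide (¬ (powMod ((AN * AN % MN + (MN - s.1 / 2 % MN)) % MN % e.2.1) e.2.2 e.2.1 = 1 % e.2.1)) &&
  decide (¬ (powMod ((e.2.1 - (AN * AN % MN + (MN - s.1 / 2 % MN)) % MN % e.2.1) % e.2.1) e.2.2 e.2.1 = 1 % e.2.1)) &&
  decide (e.1 ∈ P25) && decide (e.2.1 ∈ P25)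

def run : List (ℕ × ℕ × ℕ) → ℕ × ℕ → Bool
  | [], _ => true
  | e :: es, s => check1 e s && run es (step s)

def tbl : List (ℕ × ℕ × ℕ) := [
  (5779, 379, 7),
  (2, 31, 5),
  (19, 181, 4),
  (2, 31, 5),
  (31, 181, 20),
  (2, 631, 45),
  (11, 19, 3),
  (2, 31, 5),
  (211, 31, 3),
  (2, 31, 5),
  (379, 19, 2),
  (2, 31, 5),
  (119611, 271, 5),
  (2, 31, 5),
  (19, 181, 4),
  (2, 631, 45),
  (11, 911, 26),
  (2, 31, 5),
  (31249, 31, 1),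
  (2, 31, 5),
  (19, 181, 4),
  (2, 31, 5),
  (181, 29, 7),
  (2, 31, 5),
  (31, 19, 6),
  (2, 631, 45),
  (11, 19, 3),
  (2, 31, 5),
  (21211, 29, 4),
  (2, 31, 5),
  (42391, 631, 9),
  (2, 31, 5),
  (19, 181, 4),
  (2, 31, 5),
  (31, 181, 20),
  (2, 811, 270),
  (11, 19, 3),
  (2, 31, 5),
  (19, 181, 4),
  (2, 31, 5),
  (541, 271, 2),
  (2, 31, 5),
  (69931, 19, 3),
  (2, 31, 5),
  (19, 181, 4),
  (2, 631, 45),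
  (912871, 11, 5),
  (2, 31, 5),
  (911, 19, 2),
  (2, 31, 5),
  (211, 31, 3),
  (2, 31, 5),
  (181, 29, 7),
  (2, 31, 5),
  (29, 271, 6),
  (2, 631, 45),
  (11, 19, 3),
  (2, 31, 5),
  (71, 211, 5),
  (2, 31, 5),
  (31249, 31, 1),
  (2, 31, 5),
  (19, 181, 4),
  (2, 31, 5),
  (211, 31, 3),
  (2, 631, 45),
  (11, 19, 3),
  (2, 31, 5),
  (19, 181, 4),
  (2, 31, 5),
  (541, 271, 2),
  (2, 31, 5),
  (5779, 379, 7),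
  (2, 31, 5),
  (19, 181, 4),
  (2, 631, 45),
  (11, 911, 26),
  (2, 31, 5),
  (211, 31, 3),
  (2, 31, 5),
  (19, 181, 4),
  (2, 31, 5),
  (29, 271, 6),
  (2, 31, 5),
  (31, 19, 6),
  (2, 631, 45),
  (11, 19, 3),
  (2, 31, 5),
  (85429, 29, 7),
  (2, 31, 5),
  (5779, 379, 7),
  (2, 31, 5),
  (19, 181, 4),
  (2, 31, 5),
  (31, 181, 20),
  (2, 631, 45),
  (11, 19, 3),
  (2, 31, 5),
  (21211, 19, 3),
  (2, 31, 5),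
  (541, 271, 2),
  (2, 31, 5),
  (31249, 31, 1),
  (2, 31, 5),
  (19, 181, 4),
  (2, 631, 45),
  (211, 31, 3),
  (2, 31, 5),
  (1009, 29, 7),
  (2, 31, 5),
  (19, 181, 4),
  (2, 31, 5),
  (181, 71, 14),
  (2, 31, 5),
  (31, 19, 6),
  (2, 631, 45),
  (11, 19, 3),
  (2, 31, 5),
  (911, 19, 2),
  (2, 31, 5),
  (211, 31, 3),
  (2, 31, 5),
  (19, 181, 4),
  (2, 31, 5),
  (29, 271, 6),
  (2, 631, 45),
  (11, 19, 3),
  (2, 31, 5),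
  (19, 181, 4),
  (2, 31, 5),
  (541, 271, 2),
  (2, 31, 5),
  (631, 1009, 28),
  (2, 31, 5),
  (211, 31, 3),
  (2, 631, 45),
  (379, 19, 2),
  (2, 31, 5),
  (29, 271, 6),
  (2, 31, 5),
  (19, 181, 4),
  (2, 31, 5),
  (181, 29, 7),
  (2, 31, 5),
  (31249, 31, 1),
  (2, 631, 45),
  (11, 19, 3),
  (2, 31, 5),
  (211, 31, 3),
  (2, 31, 5),
  (811, 29, 2),
  (2, 31, 5),
  (19, 181, 4),
  (2, 31, 5),
  (31, 181, 20),
  (2, 631, 45),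
  (11, 19, 3),
  (2, 31, 5),
  (19, 181, 4),
  (2, 31, 5),
  (541, 271, 2),
  (2, 31, 5),
  (5779, 379, 7),
  (2, 31, 5),
  (19, 181, 4),
  (2, 631, 45),
  (29, 271, 6),
  (2, 31, 5),
  (21211, 19, 3),
  (2, 31, 5),
  (19, 181, 4),
  (2, 31, 5),
  (181, 29, 7),
  (2, 31, 5),
  (31, 19, 6),
  (2, 31249, 868),
  (11, 19, 3),
  (2, 31, 5),
  (17011, 29, 4),
  (2, 31, 5),
  (29, 271, 6),
  (2, 31, 5),
  (19, 181, 4),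
  (2, 31, 5),
  (31, 181, 20),
  (2, 631, 45),
  (31249, 31, 1),
  (2, 31, 5),
  (911, 19, 2),
  (2, 31, 5),
  (541, 271, 2),
  (2, 31, 5),
  (119611, 271, 5),
  (2, 31, 5),
  (19, 181, 4),
  (2, 631, 45),
  (11, 911, 26),
  (2, 31, 5),
  (71, 211, 5),
  (2, 31, 5),
  (19, 181, 4),
  (2, 31, 5),
  (181, 71, 14),
  (2, 31, 5),
  (211, 31, 3),
  (2, 631, 45),
  (11, 19, 3),
  (2, 31, 5),
  (29, 271, 6),
  (2, 31, 5),
  (42391, 631, 9),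
  (2, 31, 5),
  (19, 181, 4),
  (2, 31, 5),
  (85429, 29, 7),
  (2, 631, 45),
  (11, 19, 3),
  (2, 31, 5),
  (211, 31, 3),
  (2, 31, 5),
  (541, 271, 2),
  (2, 31, 5),
  (29, 271, 6),
  (2, 31, 5),
  (19, 181, 4),
  (2, 631, 45),
  (11, 911, 26),
  (2, 31, 5),
  (31249, 31, 1),
  (2, 31, 5),
  (19, 181, 4),
  (2, 31, 5),
  (181, 29, 7),
  (2, 31, 5),
  (31, 19, 6),
  (2, 631, 45),
  (11, 19, 3),
  (2, 31, 5),
  (21211, 29, 4),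
  (2, 31, 5),
  (811, 29, 2),
  (2, 31, 5),
  (19, 181, 4),
  (2, 31, 5),
  (31, 181, 20),
  (2, 31249, 868),
  (11, 19, 3),
  (2, 31, 5),
  (19, 181, 4),
  (2, 31, 5),
  (541, 271, 2),
  (2, 31, 5),
  (5779, 379, 7),
  (2, 31, 5),
  (19, 181, 4),
  (2, 631, 45),
  (11, 911, 26),
  (2, 31, 5),
  (911, 19, 2),
  (2, 31, 5),
  (211, 31, 3),
  (2, 31, 5),
  (379, 19, 2),
  (2, 31, 5),
  (29, 271, 6),
  (2, 631, 45),
  (11, 19, 3),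
  (2, 31, 5),
  (71, 211, 5),
  (2, 31, 5),
  (31249, 31, 1),
  (2, 31, 5),
  (19, 181, 4),
  (2, 31, 5),
  (211, 31, 3),
  (2, 631, 45),
  (11, 19, 3),
  (2, 31, 5),
  (19, 181, 4),
  (2, 31, 5),
  (541, 271, 2),
  (2, 31, 5),
  (119611, 271, 5),
  (2, 31, 5),
  (19, 181, 4),
  (2, 631, 45),
  (11, 911, 26),
  (2, 31, 5),
  (211, 31, 3),
  (2, 31, 5),
  (19, 181, 4),
  (2, 31, 5),
  (29, 271, 6),
  (2, 31, 5),
  (31, 19, 6),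
  (2, 631, 45),
  (11, 19, 3),
  (2, 31, 5),
  (912871, 911, 7),
  (2, 31, 5),
  (42391, 631, 9),
  (2, 31, 5),
  (19, 181, 4),
  (2, 31, 5),
  (31, 181, 20),
  (2, 631, 45),
  (11, 19, 3),
  (2, 31, 5),
  (21211, 19, 3),
  (2, 31, 5),
  (541, 271, 2),
  (2, 31, 5),
  (31249, 31, 1),
  (2, 31, 5),
  (19, 181, 4),
  (2, 631, 45),
  (211, 31, 3),
  (2, 31, 5),
  (1009, 29, 7),
  (2, 31, 5),
  (19, 181, 4),
  (2, 31, 5),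
  (181, 71, 14),
  (2, 31, 5),
  (31, 19, 6),
  (2, 631, 45),
  (11, 19, 3),
  (2, 31, 5),
  (911, 19, 2),
  (2, 31, 5),
  (811, 29, 2),
  (2, 31, 5),
  (19, 181, 4),
  (2, 31, 5),
  (29, 271, 6),
  (2, 631, 45),
  (11, 19, 3),
  (2, 31, 5),
  (19, 181, 4),
  (2, 31, 5),
  (541, 271, 2),
  (2, 31, 5),
  (5779, 379, 7),
  (2, 31, 5),
  (211, 31, 3),
  (2, 631, 45),
  (11, 911, 26),
  (2, 31, 5),
  (29, 271, 6),
  (2, 31, 5),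
  (19, 181, 4),
  (2, 31, 5),
  (181, 29, 7),
  (2, 31, 5),
  (31249, 31, 1),
  (2, 631, 45),
  (11, 19, 3),
  (2, 31, 5),
  (211, 31, 3),
  (2, 31, 5),
  (1009, 29, 7),
  (2, 31, 5),
  (19, 181, 4),
  (2, 31, 5),
  (31, 181, 20),
  (2, 631, 45),
  (11, 19, 3),
  (2, 31, 5),
  (19, 181, 4),
  (2, 31, 5),
  (541, 271, 2),
  (2, 31, 5),
  (119611, 271, 5),
  (2, 31, 5),
  (19, 181, 4),
  (2, 631, 45),
  (29, 271, 6),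
  (2, 31, 5),
  (21211, 19, 3),
  (2, 31, 5),
  (19, 181, 4),
  (2, 31, 5),
  (181, 29, 7),
  (2, 31, 5),
  (31, 19, 6),
  (2, 31249, 868),
  (11, 19, 3),
  (2, 31, 5),
  (379, 19, 2),
  (2, 31, 5),
  (29, 271, 6),
  (2, 31, 5),
  (19, 181, 4),
  (2, 31, 5),
  (31, 181, 20),
  (2, 631, 45),
  (31249, 31, 1),
  (2, 31, 5),
  (911, 19, 2),
  (2, 31, 5),
  (541, 271, 2),
  (2, 31, 5),
  (1009, 29, 7),
  (2, 31, 5),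
  (19, 181, 4),
  (2, 631, 45),
  (11, 911, 26),
  (2, 31, 5),
  (71, 211, 5),
  (2, 31, 5),
  (19, 181, 4),
  (2, 31, 5),
  (181, 71, 14),
  (2, 31, 5),
  (211, 31, 3),
  (2, 631, 45),
  (11, 19, 3),
  (2, 31, 5),
  (29, 271, 6),
  (2, 31, 5),
  (811, 29, 2),
  (2, 31, 5),
  (19, 181, 4),
  (2, 31, 5),
  (912871, 911, 7),
  (2, 631, 45),
  (11, 19, 3),
  (2, 31, 5),
  (211, 31, 3),
  (2, 31, 5),
  (541, 271, 2),
  (2, 31, 5),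
  (29, 271, 6),
  (2, 31, 5),
  (19, 181, 4),
  (2, 631, 45),
  (11, 911, 26),
  (2, 31, 5),
  (31249, 31, 1),
  (2, 31, 5),
  (19, 181, 4),
  (2, 31, 5),
  (181, 29, 7),
  (2, 31, 5),
  (31, 19, 6),
  (2, 631, 45),
  (11, 19, 3),
  (2, 31, 5),
  (21211, 29, 4),
  (2, 31, 5),
  (5779, 379, 7),
  (2, 31, 5),
  (19, 181, 4),
  (2, 31, 5),
  (31, 181, 20),
  (2, 31249, 868),
  (11, 19, 3),
  (2, 31, 5),
  (19, 181, 4),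
  (2, 31, 5),
  (541, 271, 2),
  (2, 31, 5),
  (119611, 271, 5),
  (2, 31, 5),
  (19, 181, 4),
  (2, 631, 45),
  (85429, 11, 5),
  (2, 31, 5),
  (911, 19, 2),
  (2, 31, 5),
  (211, 31, 3),
  (2, 31, 5),
  (181, 29, 7),
  (2, 31, 5),
  (29, 271, 6),
  (2, 631, 45),
  (11, 19, 3),
  (2, 31, 5),
  (71, 211, 5),
  (2, 31, 5),
  (31249, 31, 1),
  (2, 31, 5),
  (19, 181, 4),
  (2, 31, 5),
  (211, 31, 3),
  (2, 631, 45),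
  (11, 19, 3),
  (2, 31, 5),
  (19, 181, 4),
  (2, 31, 5),
  (541, 271, 2),
  (2, 31, 5),
  (767131, 29, 7),
  (2, 31, 5),
  (19, 181, 4),
  (2, 631, 45),
  (11, 911, 26),
  (2, 31, 5),
  (211, 31, 3),
  (2, 31, 5),
  (19, 181, 4),
  (2, 31, 5),
  (29, 271, 6),
  (2, 31, 5),
  (31, 19, 6),
  (2, 631, 45),
  (11, 19, 3),
  (2, 31, 5),
  (271, 31, 10),
  (2, 31, 5),
  (811, 29, 2),
  (2, 31, 5),
  (19, 181, 4),
  (2, 31, 5),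
  (379, 19, 2),
  (2, 631, 45),
  (11, 19, 3),
  (2, 31, 5),
  (21211, 19, 3),
  (2, 31, 5),
  (541, 271, 2),
  (2, 31, 5),
  (31249, 31, 1),
  (2, 31, 5),
  (19, 181, 4),
  (2, 631, 45),
  (211, 31, 3),
  (2, 31, 5),
  (1009, 29, 7),
  (2, 31, 5),
  (19, 181, 4),
  (2, 31, 5),
  (181, 71, 14),
  (2, 31, 5),
  (31, 19, 6),
  (2, 631, 45),
  (11, 19, 3),
  (2, 31, 5),
  (911, 19, 2),
  (2, 31, 5),
  (211, 31, 3),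
  (2, 31, 5),
  (19, 181, 4),
  (2, 31, 5),
  (29, 271, 6),
  (2, 631, 45),
  (11, 19, 3),
  (2, 31, 5),
  (19, 181, 4),
  (2, 31, 5),
  (541, 271, 2),
  (2, 31, 5),
  (119611, 271, 5),
  (2, 31, 5),
  (211, 31, 3),
  (2, 631, 45),
  (11, 911, 26),
  (2, 31, 5),
  (29, 271, 6),
  (2, 31, 5),
  (19, 181, 4),
  (2, 31, 5),
  (181, 29, 7),
  (2, 31, 5),
  (31249, 31, 1),
  (2, 631, 45),
  (11, 19, 3),
  (2, 31, 5),
  (211, 31, 3),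
  (2, 31, 5),
  (1009, 29, 7),
  (2, 31, 5),
  (19, 181, 4),
  (2, 31, 5),
  (31, 181, 20),
  (2, 631, 45),
  (11, 19, 3),
  (2, 31, 5),
  (19, 181, 4),
  (2, 31, 5),
  (541, 271, 2),
  (2, 31, 5),
  (211, 271, 27),
  (2, 31, 5),
  (19, 181, 4),
  (2, 631, 45),
  (29, 271, 6),
  (2, 31, 5),
  (21211, 19, 3),
  (2, 31, 5),
  (19, 181, 4),
  (2, 31, 5),
  (181, 29, 7),
  (2, 31, 5),
  (31, 19, 6),
  (2, 811, 270),
  (11, 19, 3),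
  (2, 31, 5),
  (271, 31, 10),
  (2, 31, 5),
  (811, 29, 2),
  (2, 31, 5),
  (19, 181, 4),
  (2, 31, 5),
  (31, 181, 20),
  (2, 631, 45),
  (31249, 31, 1),
  (2, 31, 5),
  (911, 19, 2),
  (2, 31, 5),
  (541, 271, 2),
  (2, 31, 5),
  (1009, 29, 7),
  (2, 31, 5),
  (19, 181, 4),
  (2, 631, 45),
  (11, 911, 26),
  (2, 31, 5),
  (71, 211, 5),
  (2, 31, 5),
  (19, 181, 4),
  (2, 31, 5),
  (181, 71, 14),
  (2, 31, 5),
  (211, 31, 3),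
  (2, 631, 45),
  (11, 19, 3),
  (2, 31, 5),
  (29, 271, 6),
  (2, 31, 5)]

lemma tbl_check : run tbl (0, 1) = true := by decide

lemma tbl_len : tbl.length = 630 := by decide

lemma run_spec : ∀ (L : List (ℕ × ℕ × ℕ)) (s : ℕ × ℕ), run L s = true →
    ∀ (j : ℕ) (hj : j < L.length), check1 (L.get ⟨j, hj⟩) (step^[j] s) = true := by
  intro L
  induction L with
  | nil => intro s h j hj; simp at hj
  | cons e es ih =>
    intro s h j hj
    rw [run, Bool.and_eq_true] at h
    cases j with
    | zero => simpa using h.1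
    | succ j =>
      have := ih (step s) h.2 j (by simpa using hj)
      simpa [Function.iterate_succ_apply] using this

lemma powMod_eq (b e m : ℕ) : powMod b e m = b ^ e % m := by
  induction e with
  | zero => simp [powMod]
  | succ e ih =>
    have h1 : (b * (b ^ e % m)) % m = (b * b ^ e) % m :=
      (Nat.mod_modEq (b ^ e) m).mul_left b
    rw [powMod, ih, h1, ← pow_succ']

lemma not_modEq_pow (p r e t : ℕ) (h1 : powMod p e r = 1 % r)
    (ht : ¬ (powMod (t % r) e r = 1 % r)) : ∀ k, ¬ Nat.ModEq r (p ^ k) t := by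
  intro k h
  apply ht
  rw [powMod_eq] at h1 ⊢
  have h2 : p ^ e ≡ 1 [MOD r] := h1
  have h4 : (p ^ k) ^ e ≡ 1 [MOD r] := by
    rw [← pow_mul, Nat.mul_comm, pow_mul]
    simpa using h2.pow k
  have h5 : t ^ e ≡ 1 [MOD r] := (h.pow e).symm.trans h4
  exact ((Nat.mod_modEq t r).pow e).trans h5

lemma second_prime {z : ℤ} {p : ℕ} (hp : p.Prime)
    (h : ∀ k : ℕ, z ≠ (p:ℤ)^k ∧ z ≠ -(p:ℤ)^k) :
    ∃ q : ℕ, q.Prime ∧ q ≠ p ∧ (q:ℤ) ∣ z := by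
  rcases eq_or_ne z 0 with rfl | hz
  · rcases eq_or_ne p 2 with rfl | hp2
    · exact ⟨3, by norm_num, by norm_num, dvd_zero _⟩
    · exact ⟨2, Nat.prime_two, Ne.symm hp2, dvd_zero _⟩
  · by_contra hcon
    push_neg at hcon
    have hm0 : z.natAbs ≠ 0 := by simpa [Int.natAbs_eq_zero] using hz
    have huniq : ∀ {d : ℕ}, d.Prime → d ∣ z.natAbs → d = p := by
      intro d hd hdm
      by_contra hdp
      exact hcon d hd hdp (Int.dvd_natAbs.mp (Int.natCast_dvd_natCast.mpr hdm))
    have hpow := Nat.eq_prime_pow_of_unique_prime_dvd hm0 huniq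
    rcases Int.natAbs_eq z with h1 | h1
    · exact (h _).1 (by rw [h1, hpow]; push_cast; ring)
    · exact (h _).2 (by rw [h1, hpow]; push_cast; ring)

lemma P25_prime : ∀ p ∈ P25, Nat.Prime p := by
  intro p hp
  fin_cases hp <;> norm_num

lemma W : ∀ n, step^[n] (0, 1) = (Nat.fib (3 * n) % NN, Nat.fib (3 * n + 1) % NN) := by
  intro n
  induction n with
  | zero => simp [NN, MN]
  | succ n ih =>
    rw [Function.iterate_succ_apply', ih]
    have key : ∀ a b : ℕ, step (a % NN, b % NN) = ((a + 2 * b) % NN, (2 * a + 3 * b) % NN) := by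
      intro a b
      unfold step
      refine Prod.ext ?_ ?_
      · exact (Nat.mod_modEq a NN).add ((Nat.mod_modEq b NN).mul_left 2)
      · exact ((Nat.mod_modEq a NN).mul_left 2).add ((Nat.mod_modEq b NN).mul_left 3)
    rw [key]
    have h2 : Nat.fib (3*n+2) = Nat.fib (3*n) + Nat.fib (3*n+1) := Nat.fib_add_two
    have h3 : Nat.fib (3*n+3) = Nat.fib (3*n+1) + Nat.fib (3*n+2) := by
      rw [show 3*n+3 = (3*n+1)+2 by omega]; exact Nat.fib_add_two
    have h4 : Nat.fib (3*n+4) = Nat.fib (3*n+2) + Nat.fib (3*n+3) := by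
      rw [show 3*n+4 = (3*n+2)+2 by omega]; exact Nat.fib_add_two
    refine Prod.ext ?_ ?_
    · simp only []
      rw [show 3*(n+1) = 3*n+3 by ring]
      congr 1
      omega
    · simp only []
      rw [show 3*(n+1)+1 = 3*n+4 by ring]
      congr 1
      omega

lemma fib_base : Nat.fib 1890 % NN = 0 ∧ Nat.fib 1891 % NN = 1 := by
  have hW := W 630
  have hbase : step^[630] ((0:ℕ), (1:ℕ)) = (0, 1) := by decide
  rw [hbase] at hW
  norm_num at hW
  exact ⟨hW.1.symm, hW.2.symm⟩

lemma fib_period : ∀ k, Nat.fib (1890 + k) % NN = Nat.fib k % NN ∧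
    Nat.fib (1890 + k + 1) % NN = Nat.fib (k + 1) % NN := by
  intro k
  induction k with
  | zero => exact ⟨fib_base.1, fib_base.2⟩
  | succ k ih =>
    refine ⟨by rw [show 1890+(k+1) = 1890+k+1 by omega]; exact ih.2, ?_⟩
    have ha : Nat.fib (1890+(k+1)+1) = Nat.fib (1890+k) + Nat.fib (1890+k+1) := by
      rw [show 1890+(k+1)+1 = (1890+k)+2 by omega]; exact Nat.fib_add_two
    have hb : Nat.fib (k+1+1) = Nat.fib k + Nat.fib (k+1) := by
      rw [show k+1+1 = k+2 by omega]; exact Nat.fib_add_two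
    rw [ha, hb, Nat.add_mod, ih.1, ih.2, ← Nat.add_mod]

lemma fib_period_mul : ∀ (j k : ℕ), Nat.fib (k + 1890 * j) % NN = Nat.fib k % NN := by
  intro j
  induction j with
  | zero => simp
  | succ j ih =>
    intro k
    rw [show k + 1890*(j+1) = 1890 + (k + 1890*j) by ring, (fib_period _).1, ih]

lemma fib_red (n : ℕ) : Nat.fib (3 * n) % NN = Nat.fib (3 * (n % 630)) % NN := by
  conv_lhs => rw [show 3*n = 3*(n % 630) + 1890 * (n / 630) by omega]
  exact fib_period_mul _ _

/-- `u n = F_{3n} / 2`, an integer since `F_{3n}` is always even. -/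
def u (n : ℕ) : ℤ := (Nat.fib (3 * n) : ℤ) / 2

lemma fib3_even (n : ℕ) : 2 ∣ Nat.fib (3 * n) := by
  have h := Nat.fib_dvd 3 (3 * n) (dvd_mul_right 3 n)
  simpa [show Nat.fib 3 = 2 by decide] using h

lemma u_modeq (n : ℕ) :
    (MN:ℤ) ∣ (u n - ((Nat.fib (3 * (n % 630)) % NN) / 2 : ℕ)) := by
  set F := Nat.fib (3 * (n % 630)) % NN with hF
  have h2F : 2 ∣ F := (Nat.dvd_mod_iff ⟨MN, rfl⟩).mpr (fib3_even (n % 630))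
  have hu2 : (Nat.fib (3*n) : ℤ) = 2 * u n := by
    have : (2:ℤ) ∣ (Nat.fib (3*n) : ℤ) := by exact_mod_cast Int.natCast_dvd_natCast.mpr (fib3_even n)
    exact (Int.mul_ediv_cancel' this).symm
  have hmod : Nat.fib (3*n) % NN = F := fib_red n
  obtain ⟨t, ht⟩ : ∃ t, Nat.fib (3*n) = NN * t + F :=
    ⟨Nat.fib (3*n) / NN, by rw [← hmod]; exact (Nat.div_add_mod _ _).symm⟩
  obtain ⟨d, hd⟩ := h2F
  have hFd : F / 2 = d := by omega
  have h2 : 2 * u n = 2 * ((MN:ℤ) * t + d) := by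
    rw [← hu2, ht, hd]
    push_cast [NN]
    ring
  have hun : u n = (MN:ℤ) * t + d := by
    have := mul_left_cancel₀ (a := (2:ℤ)) two_ne_zero h2
    exact this
  rw [hun, hFd]
  push_cast
  simpa using dvd_mul_right (MN:ℤ) t

lemma c_modeq (F : ℕ) :
    (((AN * AN % MN + (MN - F / 2 % MN)) % MN : ℕ) : ℤ) ≡ (AN:ℤ)^2 - (F/2 : ℕ) [ZMOD (MN:ℤ)] := by
  have hMN : 0 < MN := by norm_num [MN]
  have hlt : F / 2 % MN < MN := Nat.mod_lt _ hMN
  have e1 : (((AN * AN % MN + (MN - F / 2 % MN)) % MN : ℕ) : ℤ) ≡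
      ((AN * AN % MN : ℕ) : ℤ) + ((MN - F / 2 % MN : ℕ) : ℤ) [ZMOD (MN:ℤ)] := by
    have := Int.natCast_modEq_iff.mpr (Nat.mod_modEq (AN * AN % MN + (MN - F / 2 % MN)) MN)
    simpa using this
  have e2 : ((AN * AN % MN : ℕ) : ℤ) ≡ (AN:ℤ)^2 [ZMOD (MN:ℤ)] := by
    have := Int.natCast_modEq_iff.mpr (Nat.mod_modEq (AN * AN) MN)
    have h' : ((AN * AN : ℕ) : ℤ) = (AN:ℤ)^2 := by push_cast; ring
    simpa [h'] using this
  have e3 : ((MN - F / 2 % MN : ℕ) : ℤ) ≡ -((F/2 : ℕ) : ℤ) [ZMOD (MN:ℤ)] := by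
    rw [Nat.cast_sub hlt.le]
    have hz : (MN:ℤ) ≡ 0 [ZMOD (MN:ℤ)] := Int.modEq_zero_iff_dvd.mpr dvd_rfl
    have hm : ((F / 2 % MN : ℕ) : ℤ) ≡ ((F/2 : ℕ) : ℤ) [ZMOD (MN:ℤ)] :=
      Int.natCast_modEq_iff.mpr (Nat.mod_modEq _ _)
    simpa using hz.sub hm
  calc (((AN * AN % MN + (MN - F / 2 % MN)) % MN : ℕ) : ℤ)
      ≡ ((AN * AN % MN : ℕ) : ℤ) + ((MN - F / 2 % MN : ℕ) : ℤ) [ZMOD (MN:ℤ)] := e1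
    _ ≡ (AN:ℤ)^2 + -((F/2 : ℕ) : ℤ) [ZMOD (MN:ℤ)] := e2.add e3
    _ = (AN:ℤ)^2 - ((F/2 : ℕ) : ℤ) := by ring

/-- For every integer `x ≡ a (mod M)` (with the 80-digit `a` and `M` below)
and every `n ∈ ℕ`, the integer `x² - F_{3n}/2` has at least two distinct prime divisors. -/
theorem sq_sub_half_fib_has_two_prime_divisors
    (x : ℤ)
    (hx : x ≡ 31207386885274502188173522132023665167365193670823768234185354856354918873864275
      [ZMOD 36812852443922071184402498913076070503146229820861211558347078871354783744850778])
    (n : ℕ) :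
    ∃ p q : ℕ, p.Prime ∧ q.Prime ∧ p ≠ q ∧
      (p : ℤ) ∣ x ^ 2 - u n ∧ (q : ℤ) ∣ x ^ 2 - u n := by
  have hm : n % 630 < 630 := Nat.mod_lt _ (by norm_num)
  have hchk := run_spec tbl (0, 1) tbl_check (n % 630) (by rw [tbl_len]; exact hm)
  rcases hE : tbl.get ⟨n % 630, by rw [tbl_len]; exact hm⟩ with ⟨p, r, ec⟩
  rw [hE, W (n % 630)] at hchk
  simp only [check1, Bool.and_eq_true, decide_eq_true_eq] at hchk
  obtain ⟨⟨⟨⟨⟨⟨⟨⟨h2F, hpM⟩, hrM⟩, hpc⟩, hpe⟩, hce⟩, hc'e⟩, hpP⟩, hrP⟩ := hchk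
  set F := Nat.fib (3 * (n % 630)) % NN with hFdef
  set c := (AN * AN % MN + (MN - F / 2 % MN)) % MN with hcdef
  have hpPrime : p.Prime := P25_prime p hpP
  have hrPrime : r.Prime := P25_prime r hrP
  set z := x ^ 2 - u n with hzdef
  have hx' : x ≡ (AN:ℤ) [ZMOD (MN:ℤ)] := by
    have h1 : ((AN:ℕ) : ℤ) = 31207386885274502188173522132023665167365193670823768234185354856354918873864275 := by
      norm_num [AN]
    have h2 : ((MN:ℕ) : ℤ) = 36812852443922071184402498913076070503146229820861211558347078871354783744850778 := by
      norm_num [MN]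
    rw [h1, h2]
    exact hx
  have hz_c : z ≡ (c:ℤ) [ZMOD (MN:ℤ)] := by
    have hz1 : z ≡ (AN:ℤ)^2 - u n [ZMOD (MN:ℤ)] := (hx'.pow 2).sub_right (u n)
    have hz2 : (AN:ℤ)^2 - u n ≡ (AN:ℤ)^2 - ((F/2 : ℕ) : ℤ) [ZMOD (MN:ℤ)] := by
      have h := Int.ModEq.symm (Int.modEq_iff_dvd.mpr (u_modeq n))
      exact Int.ModEq.sub_left _ h
    exact (hz1.trans hz2).trans (c_modeq F).symm
  have hrpos : 0 < r := hrPrime.pos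
  have hpz : (p:ℤ) ∣ z := by
    have h1 : z ≡ (c:ℤ) [ZMOD (p:ℤ)] := hz_c.of_dvd (Int.natCast_dvd_natCast.mpr hpM)
    have h2 : (c:ℤ) ≡ 0 [ZMOD (p:ℤ)] := Int.modEq_zero_iff_dvd.mpr (Int.natCast_dvd_natCast.mpr hpc)
    exact Int.modEq_zero_iff_dvd.mp (h1.trans h2)
  have hzr : z ≡ (c:ℤ) [ZMOD (r:ℤ)] := hz_c.of_dvd (Int.natCast_dvd_natCast.mpr hrM)
  have hnp : ∀ k : ℕ, z ≠ (p:ℤ)^k ∧ z ≠ -(p:ℤ)^k := by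
    intro k
    constructor
    · intro he
      apply not_modEq_pow p r ec c hpe hce k
      have : ((p^k : ℕ) : ℤ) ≡ (c:ℤ) [ZMOD (r:ℤ)] := by push_cast; rw [← he]; exact hzr
      exact Int.natCast_modEq_iff.mp this
    · intro he
      apply not_modEq_pow p r ec (r - c % r) hpe hc'e k
      have h1 : -((p:ℤ)^k) ≡ (c:ℤ) [ZMOD (r:ℤ)] := by rw [← he]; exact hzr
      have h2 : ((p^k : ℕ) : ℤ) ≡ -(c:ℤ) [ZMOD (r:ℤ)] := by
        push_cast
        simpa using h1.neg
      have hcr : c % r < r := Nat.mod_lt _ hrpos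
      have h3 : -(c:ℤ) ≡ ((r - c % r : ℕ) : ℤ) [ZMOD (r:ℤ)] := by
        rw [Nat.cast_sub hcr.le]
        have hz0 : (0:ℤ) ≡ (r:ℤ) [ZMOD (r:ℤ)] := (Int.modEq_zero_iff_dvd.mpr dvd_rfl).symm
        have hm2 : (c:ℤ) ≡ ((c % r : ℕ) : ℤ) [ZMOD (r:ℤ)] :=
          (Int.natCast_modEq_iff.mpr (Nat.mod_modEq _ _)).symm
        have := hz0.sub hm2
        simpa using this
      exact Int.natCast_modEq_iff.mp (h2.trans h3)
  obtain ⟨q, hq, hqp, hqz⟩ := second_prime hpPrime hnp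
  exact ⟨p, q, hpPrime, hq, hqp.symm, hpz, hqz⟩
end

section
/- Let c be a positive integer and define the sequence {U_n}_{n≥0} by U_0 = 0, U_1 = 1, and U_{n+1} = c·U_n + U_{n−1} for n ≥ 1. Suppose n is a positive integer with n ≡ 2 (mod 4), and p is a prime which divides U_n but divides none of U_1, …, U_{n−1}. Then for every k ∈ ℕ and every r ∈ {0, 1, …, n−1}, one has U_{kn+r} ≡ U_r (mod p). -/
/-- The Lucas-type sequence `U_0 = 0`, `U_1 = 1`, `U_{n+1} = c·U_n + U_{n-1}`. -/
def U (c : ℕ) : ℕ → ℕ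
  | 0 => 0
  | 1 => 1
  | n + 2 => c * U c (n + 1) + U c n

/-!
Write `n = 2m` with `m` odd. Since `U_{2m} = U_m (U_{m-1} + U_{m+1})` and `p ∤ U_m`, we get
`U_{m-1} ≡ -U_{m+1}`; Cassini's identity `U_{m+1} U_{m-1} - U_m² = -1` (as `m - 1` is even)
then turns `U_{2m+1} = U_m² + U_{m+1}²` into `U_{n+1} ≡ 1`. Together with `U_n ≡ 0`, the addition formula
`U_{a+n+1} = U_a U_n + U_{a+1} U_{n+1}` shows that `U` is periodic mod `p` with period `n`.
-/

namespace U

variable (c : ℕ)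

theorem add_two (m : ℕ) : U c (m + 2) = c * U c (m + 1) + U c m := rfl

theorem add_add_one (a : ℕ) : ∀ b, U c (a + b + 1) = U c a * U c b + U c (a + 1) * U c (b + 1)
  | 0 => by simp [U]
  | 1 => by simp [U]; ring
  | b + 2 => by
    have h : U c (a + (b + 2) + 1) = c * U c (a + (b + 1) + 1) + U c (a + b + 1) :=
      add_two c (a + b + 1)
    have h₂ : U c (b + 2 + 1) = c * U c (b + 2) + U c (b + 1) := add_two c (b + 1)
    rw [h, add_add_one a (b + 1), add_add_one a b, h₂, add_two c b]
    ring

theorem two_mul_add_one (m : ℕ) : U c (2 * m + 1) = U c m ^ 2 + U c (m + 1) ^ 2 := by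
  rw [two_mul, add_add_one]; ring

theorem two_mul_add_two (m : ℕ) : U c (2 * m + 2) = U c (m + 1) * (U c m + U c (m + 2)) := by
  rw [show 2 * m + 2 = m + (m + 1) + 1 by ring, add_add_one, add_two]; ring

theorem cassini : ∀ m, (U c (m + 2) * U c m : ℤ) - U c (m + 1) ^ 2 = (-1) ^ (m + 1)
  | 0 => by simp [U]
  | m + 1 => by
    have ih := cassini m
    simp only [add_two, Nat.cast_add, Nat.cast_mul] at ih ⊢
    linear_combination -ih

theorem add_modEq_of_modEq_zero_of_modEq_one {n p : ℕ} (h₀ : U c n ≡ 0 [MOD p])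
    (h₁ : U c (n + 1) ≡ 1 [MOD p]) : ∀ a, U c (a + n) ≡ U c a [MOD p]
  | 0 => by simpa [U] using h₀
  | a + 1 =>
    calc U c (a + 1 + n) = U c a * U c n + U c (a + 1) * U c (n + 1) := by
          rw [← add_add_one]; ring_nf
      _ ≡ U c a * 0 + U c (a + 1) * 1 [MOD p] := (h₀.mul_left _).add (h₁.mul_left _)
      _ = U c (a + 1) := by ring

theorem mul_add_modEq_of_modEq_zero_of_modEq_one {n p : ℕ} (h₀ : U c n ≡ 0 [MOD p])
    (h₁ : U c (n + 1) ≡ 1 [MOD p]) (k r : ℕ) : U c (k * n + r) ≡ U c r [MOD p] := by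
  induction k with
  | zero => simp [Nat.ModEq.refl]
  | succ k ih =>
    rw [show (k + 1) * n + r = k * n + r + n by ring]
    exact (add_modEq_of_modEq_zero_of_modEq_one c h₀ h₁ _).trans ih

theorem two_mul_add_three_modEq_one {p j : ℕ} (hp : p.Prime) (hj : Even j)
    (hdvd : p ∣ U c (2 * j + 2)) (hndvd : ¬ p ∣ U c (j + 1)) :
    U c (2 * j + 3) ≡ 1 [MOD p] := by
  have := Fact.mk hp
  rw [show 2 * j + 3 = 2 * (j + 1) + 1 by ring, ← ZMod.natCast_eq_natCast_iff, two_mul_add_one,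
    Nat.cast_one]
  rw [← ZMod.natCast_eq_zero_iff, two_mul_add_two] at hdvd
  rw [← ZMod.natCast_eq_zero_iff] at hndvd
  push_cast at hdvd ⊢
  have hsum : (U c j : ZMod p) + U c (j + 2) = 0 :=
    (mul_eq_zero.mp hdvd).resolve_left hndvd
  have hcas := congrArg (Int.cast : ℤ → ZMod p) (cassini c j)
  rw [(hj.add_one).neg_one_pow] at hcas
  push_cast at hcas
  linear_combination -hcas + (U c (j + 2) : ZMod p) * hsum

end U

theorem lucas_seq_periodicity_mod_primitive_prime_general
    (c : ℕ) (n : ℕ) (hn4 : n % 4 = 2)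
    (p : ℕ) (hp : p.Prime) (hdvd : p ∣ U c n)
    (hprim : ∀ m : ℕ, 0 < m → m < n → ¬ p ∣ U c m) :
    ∀ k r : ℕ, r < n → U c (k * n + r) ≡ U c r [MOD p] := by
  obtain ⟨t, rfl⟩ : ∃ t, n = 2 * (2 * t) + 2 := ⟨n / 4, by omega⟩
  have hsucc : U c (2 * (2 * t) + 2 + 1) ≡ 1 [MOD p] :=
    U.two_mul_add_three_modEq_one c hp (even_two_mul t) hdvd (hprim _ (by omega) (by omega))
  exact fun k r _ =>
    U.mul_add_modEq_of_modEq_zero_of_modEq_one c (Nat.modEq_zero_iff_dvd.mpr hdvd) hsucc k r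

/-- Lemma 4.1: If `c ≥ 1`, `n > 0`, `n ≡ 2 (mod 4)`, and `p` is a prime
dividing `U_n` but none of `U_1, …, U_{n-1}`, then `U_{kn+r} ≡ U_r (mod p)` for all
`k ∈ ℕ` and `0 ≤ r < n`. -/
theorem lucas_seq_periodicity_mod_primitive_prime
    (c : ℕ) (hc : 0 < c) (n : ℕ) (hn : 0 < n) (hn4 : n % 4 = 2)
    (p : ℕ) (hp : p.Prime) (hdvd : p ∣ U c n)
    (hprim : ∀ m : ℕ, 0 < m → m < n → ¬ p ∣ U c m) :
    ∀ k r : ℕ, r < n → U c (k * n + r) ≡ U c r [MOD p] :=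
  lucas_seq_periodicity_mod_primitive_prime_general c n hn4 p hp hdvd hprim
end

section
/- The 24 residue classes 1(3), 2(5), 3(5), 4(7), 6(7), 0(9), 5(15), 11(15), 9(21), 12(21), 1(35), 14(35), 24(35), 29(35), 6(45), 15(45), 29(45), 30(45), 5(63), 23(63), 44(63), 66(105), 21(315), 89(315) form a cover of ℤ; that is, every integer x satisfies at least one of the congruences x ≡ 1 (mod 3), x ≡ 2 (mod 5), x ≡ 3 (mod 5), x ≡ 4 (mod 7), x ≡ 6 (mod 7), x ≡ 0 (mod 9), x ≡ 5 (mod 15), x ≡ 11 (mod 15), x ≡ 9 (mod 21), x ≡ 12 (mod 21), x ≡ 1 (mod 35), x ≡ 14 (mod 35), x ≡ 24 (mod 35), x ≡ 29 (mod 35), x ≡ 6 (mod 45), x ≡ 15 (mod 45), x ≡ 29 (mod 45), x ≡ 30 (mod 45), x ≡ 5 (mod 63), x ≡ 23 (mod 63), x ≡ 44 (mod 63), x ≡ 66 (mod 105), x ≡ 21 (mod 315), x ≡ 89 (mod 315). -/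
/-! Every modulus divides 315, so whether `x` lies in one of the classes depends only on
`x % 315`; the 315 residues are then checked one by one. -/

theorem Int.emod_modEq_iff {n N : ℤ} (hn : n ∣ N) {x a : ℤ} :
    x % N ≡ a [ZMOD n] ↔ x ≡ a [ZMOD n] :=
  have hx : x % N ≡ x [ZMOD n] := (Int.mod_modEq x N).of_dvd hn
  ⟨hx.symm.trans, hx.trans⟩

/-- The 24 residue classes listed below form a cover of ℤ. -/
theorem odd_moduli_cover_24 (x : ℤ) :
    x ≡ 1 [ZMOD 3] ∨ x ≡ 2 [ZMOD 5] ∨ x ≡ 3 [ZMOD 5] ∨ x ≡ 4 [ZMOD 7] ∨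
    x ≡ 6 [ZMOD 7] ∨ x ≡ 0 [ZMOD 9] ∨ x ≡ 5 [ZMOD 15] ∨ x ≡ 11 [ZMOD 15] ∨
    x ≡ 9 [ZMOD 21] ∨ x ≡ 12 [ZMOD 21] ∨ x ≡ 1 [ZMOD 35] ∨ x ≡ 14 [ZMOD 35] ∨
    x ≡ 24 [ZMOD 35] ∨ x ≡ 29 [ZMOD 35] ∨ x ≡ 6 [ZMOD 45] ∨ x ≡ 15 [ZMOD 45] ∨
    x ≡ 29 [ZMOD 45] ∨ x ≡ 30 [ZMOD 45] ∨ x ≡ 5 [ZMOD 63] ∨ x ≡ 23 [ZMOD 63] ∨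
    x ≡ 44 [ZMOD 63] ∨ x ≡ 66 [ZMOD 105] ∨ x ≡ 21 [ZMOD 315] ∨ x ≡ 89 [ZMOD 315] := by
  have hreduce {n a : ℤ} (hn : n ∣ 315) : x ≡ a [ZMOD n] ↔ x % 315 ≡ a [ZMOD n] :=
    (Int.emod_modEq_iff hn).symm
  simp (disch := norm_num) only [hreduce]
  have hlo : 0 ≤ x % 315 := Int.emod_nonneg x (by norm_num)
  have hhi : x % 315 < 315 := Int.emod_lt_of_pos x (by norm_num)
  generalize x % 315 = r at *
  interval_cases r <;> decide
end

section
/- Let a = 31207386885274502188173522132023665167365193670823768234185354856354918873864275 and M = 36812852443922071184402498913076070503146229820861211558347078871354783744850778, and for n ∈ ℕ set u_n = F_{3n}/2. Then for every integer x with x ≡ a (mod M) and all k, b ∈ ℕ, one has x² − u_{1+2k} ≠ 2^b and x² − u_{1+2k} ≠ −2^b. -/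
set_option maxRecDepth 10000

lemma fib_period_s11 (n : ℕ) : Nat.fib (n + 126) ≡ Nat.fib n [MOD 62498] := by
  have h : Nat.fib (n + 125 + 1) = Nat.fib n * Nat.fib 125 + Nat.fib (n + 1) * Nat.fib 126 :=
    Nat.fib_add n 125
  have h125 : Nat.fib 125 ≡ 1 [MOD 62498] := by decide
  have h126 : Nat.fib 126 ≡ 0 [MOD 62498] := by decide
  have : n + 126 = n + 125 + 1 := by omega
  rw [this, h]
  calc Nat.fib n * Nat.fib 125 + Nat.fib (n + 1) * Nat.fib 126
      ≡ Nat.fib n * 1 + Nat.fib (n + 1) * 0 [MOD 62498] :=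
        Nat.ModEq.add (h125.mul_left _) (h126.mul_left _)
    _ = Nat.fib n := by ring

lemma fib_mod (k : ℕ) : Nat.fib (3 + 6 * k) ≡ Nat.fib (3 + 6 * (k % 21)) [MOD 62498] := by
  induction k using Nat.strong_induction_on with
  | _ k ih =>
    by_cases h : k < 21
    · rw [Nat.mod_eq_of_lt h]
    · have h1 : 3 + 6 * k = (3 + 6 * (k - 21)) + 126 := by omega
      have h2 : (k - 21) % 21 = k % 21 := by omega
      rw [h1]
      calc Nat.fib ((3 + 6 * (k - 21)) + 126)
          ≡ Nat.fib (3 + 6 * (k - 21)) [MOD 62498] := fib_period_s11 _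
        _ ≡ Nat.fib (3 + 6 * ((k - 21) % 21)) [MOD 62498] := ih _ (by omega)
        _ = Nat.fib (3 + 6 * (k % 21)) := by rw [h2]

lemma main_check (j : ℕ) (hj : j < 21) :
    (((10727 : ZMod 31249)) ^ 2 - ((Nat.fib (3 + 6 * j) / 2 : ℕ) : ZMod 31249)) ^ 868 ≠ 1 := by
  interval_cases j <;> decide

lemma two_pow_ord : (2 : ZMod 31249) ^ 868 = 1 := by decide

lemma key (x : ℤ)
    (hx : x ≡ 31207386885274502188173522132023665167365193670823768234185354856354918873864275
      [ZMOD 36812852443922071184402498913076070503146229820861211558347078871354783744850778])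
    (k b : ℕ) (ε : ℤ) (hε : ε = 1 ∨ ε = -1) :
    x ^ 2 - u (1 + 2 * k) ≠ ε * 2 ^ b := by
  intro h
  -- rewrite u
  have h3 : 3 * (1 + 2 * k) = 3 + 6 * k := by ring
  have hu : u (1 + 2 * k) = ((Nat.fib (3 + 6 * k) / 2 : ℕ) : ℤ) := by
    rw [u, h3, Int.natCast_div]; rfl
  -- evenness
  have hev : 2 ∣ Nat.fib (3 + 6 * k) := by
    have : Nat.fib 3 ∣ Nat.fib (3 + 6 * k) := Nat.fib_dvd 3 (3 + 6 * k) ⟨1 + 2 * k, by ring⟩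
    simpa [show Nat.fib 3 = 2 by decide] using this
  have hev' : 2 ∣ Nat.fib (3 + 6 * (k % 21)) := by
    have : Nat.fib 3 ∣ Nat.fib (3 + 6 * (k % 21)) :=
      Nat.fib_dvd 3 (3 + 6 * (k % 21)) ⟨1 + 2 * (k % 21), by ring⟩
    simpa [show Nat.fib 3 = 2 by decide] using this
  -- halves are congruent mod 31249
  have hhalf : ((Nat.fib (3 + 6 * k) / 2 : ℕ) : ZMod 31249)
      = ((Nat.fib (3 + 6 * (k % 21)) / 2 : ℕ) : ZMod 31249) := by
    obtain ⟨c, hc⟩ := hev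
    obtain ⟨c', hc'⟩ := hev'
    have hm := fib_mod k
    rw [hc, hc'] at hm ⊢
    rw [Nat.mul_div_cancel_left c (by norm_num), Nat.mul_div_cancel_left c' (by norm_num)]
    apply (ZMod.natCast_eq_natCast_iff _ _ _).2
    have hd : (62498 : ℤ) ∣ ((2 * c' : ℕ) : ℤ) - ((2 * c : ℕ) : ℤ) := hm.dvd
    have hd2 : (31249 : ℤ) ∣ (c' : ℤ) - (c : ℤ) := by
      obtain ⟨t, ht⟩ := hd
      push_cast at ht
      exact ⟨t, by linarith⟩
    exact (Nat.modEq_iff_dvd).mpr hd2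
  -- reduce hypothesis mod 31249
  have hdvd : (31249 : ℤ) ∣ 36812852443922071184402498913076070503146229820861211558347078871354783744850778 := by norm_num
  have hx' := hx.of_dvd hdvd
  have hxc : ((x : ℤ) : ZMod 31249) = (10727 : ZMod 31249) := by
    have := (ZMod.intCast_eq_intCast_iff _ _ _).2 hx'
    rw [this]; decide
  -- cast the equation
  have hc : ((x : ℤ) : ZMod 31249) ^ 2 - ((Nat.fib (3 + 6 * k) / 2 : ℕ) : ZMod 31249)
      = (ε : ZMod 31249) * 2 ^ b := by
    have h' : ((x ^ 2 - ((Nat.fib (3 + 6 * k) / 2 : ℕ) : ℤ) : ℤ) : ZMod 31249)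
        = ((ε * 2 ^ b : ℤ) : ZMod 31249) := by rw [← hu, h]
    push_cast at h'
    exact h'
  rw [hxc, hhalf] at hc
  have hpow := congrArg (fun z : ZMod 31249 => z ^ 868) hc
  have hε2 : ((ε : ZMod 31249)) ^ 868 = 1 := by
    rcases hε with rfl | rfl <;> norm_num
  have h2 : ((2 : ZMod 31249) ^ b) ^ 868 = 1 := by
    rw [← pow_mul, mul_comm, pow_mul, two_pow_ord, one_pow]
  rw [mul_pow, hε2, h2, one_mul] at hpow
  exact main_check (k % 21) (Nat.mod_lt _ (by norm_num)) hpow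

/-- Case 4.0 of the proof of Theorem 1.3: for every integer
`x ≡ a (mod M)` and all `k, b ∈ ℕ`, `x² - u_{1+2k}` is not `±2^b`. -/
theorem sq_sub_u_ne_pm_pow_2
    (x : ℤ)
    (hx : x ≡ 31207386885274502188173522132023665167365193670823768234185354856354918873864275
      [ZMOD 36812852443922071184402498913076070503146229820861211558347078871354783744850778])
    (k b : ℕ) :
    x ^ 2 - u (1 + 2 * k) ≠ 2 ^ b ∧ x ^ 2 - u (1 + 2 * k) ≠ -(2 ^ b) := by
  constructor
  · simpa using key x hx k b 1 (Or.inl rfl)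
  · simpa using key x hx k b (-1) (Or.inr rfl)
end

section
/- Let a = 31207386885274502188173522132023665167365193670823768234185354856354918873864275 and M = 36812852443922071184402498913076070503146229820861211558347078871354783744850778, and for n ∈ ℕ set u_n = F_{3n}/2. Then for every integer x with x ≡ a (mod M) and all k, b ∈ ℕ, one has x² − u_{2+6k} ≠ 19^b and x² − u_{2+6k} ≠ −19^b. -/
theorem Nat.fib_add_modEq_of_period {m p : ℕ} (h₀ : Nat.fib p ≡ 0 [MOD m])
    (h₁ : Nat.fib (p + 1) ≡ 1 [MOD m]) (n : ℕ) : Nat.fib (n + p) ≡ Nat.fib n [MOD m] := by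
  cases n with
  | zero => simpa using h₀
  | succ n =>
    calc Nat.fib (n + 1 + p) = Nat.fib p * Nat.fib n + Nat.fib (p + 1) * Nat.fib (n + 1) := by
          rw [← Nat.fib_add, Nat.add_right_comm, Nat.add_comm n p]
      _ ≡ 0 * Nat.fib n + 1 * Nat.fib (n + 1) [MOD m] := by gcongr
      _ = Nat.fib (n + 1) := by ring

theorem Nat.fib_add_mul_modEq_of_period {m p : ℕ} (h₀ : Nat.fib p ≡ 0 [MOD m])
    (h₁ : Nat.fib (p + 1) ≡ 1 [MOD m]) (n q : ℕ) :
    Nat.fib (n + p * q) ≡ Nat.fib n [MOD m] := by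
  induction q with
  | zero => rfl
  | succ q ih =>
    rw [Nat.mul_succ, ← Nat.add_assoc]
    exact (Nat.fib_add_modEq_of_period h₀ h₁ _).trans ih

theorem Nat.fib_add_ninety_mul_modEq (n q : ℕ) : Nat.fib (n + 90 * q) ≡ Nat.fib n [MOD 362] :=
  Nat.fib_add_mul_modEq_of_period (by norm_num [Nat.ModEq]) (by norm_num [Nat.ModEq]) n q

theorem two_mul_u (n : ℕ) : 2 * u n = Nat.fib (3 * n) := by
  have h : (2 : ℤ) ∣ Nat.fib (3 * n) := by
    exact_mod_cast Nat.isDvdSequence_fib 3 (3 * n) (dvd_mul_right 3 n)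
  exact Int.mul_ediv_cancel' h

theorem u_add_thirty_mul_modEq (n q : ℕ) : u (n + 30 * q) ≡ u n [ZMOD 181] := by
  refine Int.ModEq.mul_left_cancel' (c := 2) two_ne_zero ?_
  rw [two_mul_u, two_mul_u, show 3 * (n + 30 * q) = 3 * n + 90 * q by ring]
  exact_mod_cast Nat.fib_add_ninety_mul_modEq (3 * n) q

theorem u_two_add_six_mul_modEq (k : ℕ) : u (2 + 6 * k) ≡ u (2 + 6 * (k % 5)) [ZMOD 181] := by
  conv_lhs => rw [← Nat.mod_add_div k 5, Nat.mul_add, ← Nat.add_assoc, ← Nat.mul_assoc]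
  exact u_add_thirty_mul_modEq _ _

theorem pow_four_eq_one_of_eq_pm_pow_19 {y : ZMod 181} (b : ℕ) (h : y = 19 ^ b ∨ y = -19 ^ b) :
    y ^ 4 = 1 := by
  have h19 : (19 : ZMod 181) ^ 4 = 1 := by decide
  have hpow : (19 ^ b : ZMod 181) ^ 4 = 1 := by rw [← pow_mul, mul_comm, pow_mul, h19, one_pow]
  rcases h with rfl | rfl
  · exact hpow
  · rwa [Even.neg_pow (by decide)]

theorem sq_sub_u_pow_four_ne_one (k : ℕ) : ((76 : ZMod 181) ^ 2 - u (2 + 6 * k)) ^ 4 ≠ 1 := by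
  rw [(ZMod.intCast_eq_intCast_iff _ _ 181).2 (u_two_add_six_mul_modEq k)]
  have hk : k % 5 < 5 := Nat.mod_lt k (by norm_num)
  interval_cases k % 5 <;> norm_num [u, Nat.fib] <;> decide

/-- Case 4.1 of the proof of Theorem 1.3: for every integer
`x ≡ a (mod M)` and all `k, b ∈ ℕ`, `x² - u_{2+6k}` is not `±19^b`. -/
theorem sq_sub_u_ne_pm_pow_19
    (x : ℤ)
    (hx : x ≡ 31207386885274502188173522132023665167365193670823768234185354856354918873864275
      [ZMOD 36812852443922071184402498913076070503146229820861211558347078871354783744850778])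
    (k b : ℕ) :
    x ^ 2 - u (2 + 6 * k) ≠ 19 ^ b ∧ x ^ 2 - u (2 + 6 * k) ≠ -(19 ^ b) := by
  have hx181 : (x : ZMod 181) = 76 := by
    rw [(ZMod.intCast_eq_intCast_iff _ _ 181).2 (hx.of_dvd (by norm_num))]
    decide
  have hmod : ((x ^ 2 - u (2 + 6 * k) : ℤ) : ZMod 181) ^ 4 ≠ 1 := by
    push_cast
    rw [hx181]
    exact sq_sub_u_pow_four_ne_one k
  refine ⟨fun h => hmod ?_, fun h => hmod ?_⟩ <;> rw [h] <;> push_cast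
  · exact pow_four_eq_one_of_eq_pm_pow_19 b (.inl rfl)
  · exact pow_four_eq_one_of_eq_pm_pow_19 b (.inr rfl)
end

section
/- Let a = 31207386885274502188173522132023665167365193670823768234185354856354918873864275 and M = 36812852443922071184402498913076070503146229820861211558347078871354783744850778, and for n ∈ ℕ set u_n = F_{3n}/2. Then for every integer x with x ≡ a (mod M) and all k, b ∈ ℕ, one has x² − u_{6+10k} ≠ 11^b and x² − u_{6+10k} ≠ −11^b. -/
theorem Nat.periodic_fib_cast {R : Type*} [Semiring R] {p : ℕ}
    (h₀ : (Nat.fib p : R) = 0) (h₁ : (Nat.fib (p + 1) : R) = 1) :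
    Function.Periodic (fun n ↦ (Nat.fib n : R)) p := by
  rintro (_ | n)
  · simpa using h₀
  · simp only [show n + 1 + p = p + n + 1 by omega, Nat.fib_add, Nat.cast_add, Nat.cast_mul,
      h₀, h₁, zero_mul, zero_add, one_mul]

theorem periodic_fib_cast_zmod_911 : Function.Periodic (fun n ↦ (Nat.fib n : ZMod 911)) 70 :=
  Nat.periodic_fib_cast (by decide) (by decide)

theorem fib_eighteen_add_thirty_mul_cast_zmod_911 (k : ℕ) :
    (Nat.fib (18 + 30 * k) : ZMod 911) = Nat.fib (18 + 30 * (k % 7)) := by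
  have h : Function.Periodic (fun k ↦ (Nat.fib (18 + 30 * k) : ZMod 911)) 7 := fun k ↦ by
    simpa [show 18 + 30 * (k + 7) = 18 + 30 * k + 3 * 70 by ring] using
      periodic_fib_cast_zmod_911.nat_mul 3 (18 + 30 * k)
  exact (h.map_mod_nat k).symm

theorem eleven_pow_cast_zmod_911 (b : ℕ) : (11 : ZMod 911) ^ b = 11 ^ (b % 26) :=
  pow_eq_pow_mod b (by decide)

theorem two_mul_sq_257_sub_fib_ne_two_mul_pm_pow_11 :
    ∀ j < 7, ∀ s < 26,
      (2 * 257 ^ 2 - Nat.fib (18 + 30 * j) : ZMod 911) ≠ 2 * 11 ^ s ∧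
      (2 * 257 ^ 2 - Nat.fib (18 + 30 * j) : ZMod 911) ≠ -(2 * 11 ^ s) := by
  decide

theorem two_mul_sq_sub_u_cast_zmod_911 {x : ℤ} (hx : (x : ZMod 911) = 257) (k : ℕ) :
    ((2 * (x ^ 2 - u (6 + 10 * k)) : ℤ) : ZMod 911) =
      2 * 257 ^ 2 - Nat.fib (18 + 30 * (k % 7)) := by
  rw [mul_sub, two_mul_u, show 3 * (6 + 10 * k) = 18 + 30 * k by ring]
  push_cast
  rw [hx, fib_eighteen_add_thirty_mul_cast_zmod_911]

/-- Case 4.3 of the proof of Theorem 1.3: for every integer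
`x ≡ a (mod M)` and all `k, b ∈ ℕ`, `x² - u_{6+10k}` is not `±11^b`. -/
theorem sq_sub_u_ne_pm_pow_11
    (x : ℤ)
    (hx : x ≡ 31207386885274502188173522132023665167365193670823768234185354856354918873864275
      [ZMOD 36812852443922071184402498913076070503146229820861211558347078871354783744850778])
    (k b : ℕ) :
    x ^ 2 - u (6 + 10 * k) ≠ 11 ^ b ∧ x ^ 2 - u (6 + 10 * k) ≠ -(11 ^ b) := by
  have hx911 : (x : ZMod 911) = 257 := by
    rw [(ZMod.intCast_eq_intCast_iff _ _ 911).2 (hx.of_dvd (by norm_num))]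
    decide
  have hcast := two_mul_sq_sub_u_cast_zmod_911 hx911 k
  obtain ⟨hplus, hminus⟩ := two_mul_sq_257_sub_fib_ne_two_mul_pm_pow_11
    (k % 7) (Nat.mod_lt _ (by norm_num)) (b % 26) (Nat.mod_lt _ (by norm_num))
  rw [← eleven_pow_cast_zmod_911, ← hcast] at hplus hminus
  constructor <;> rintro h <;> simp [h] at hplus hminus
end

section
/- Let a = 31207386885274502188173522132023665167365193670823768234185354856354918873864275 and M = 36812852443922071184402498913076070503146229820861211558347078871354783744850778, and for n ∈ ℕ set u_n = F_{3n}/2. Then for every integer x with x ≡ a (mod M) and all k, b ∈ ℕ, one has x² − u_{132+210k} ≠ 631^b and x² − u_{132+210k} ≠ −631^b. -/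
namespace Nat

theorem fib_add_modEq_of_period_s18 {m p : ℕ} (h₀ : fib p ≡ 0 [MOD m])
    (h₁ : fib (p + 1) ≡ 1 [MOD m]) (n : ℕ) : fib (n + p) ≡ fib n [MOD m] := by
  cases n with
  | zero => simpa using h₀
  | succ n =>
    rw [add_comm, ← add_assoc, fib_add]
    calc fib p * fib n + fib (p + 1) * fib (n + 1)
        ≡ 0 * fib n + 1 * fib (n + 1) [MOD m] := (h₀.mul_right _).add (h₁.mul_right _)
      _ = fib (n + 1) := by ring

theorem fib_add_mul_modEq_of_period_s18 {m p : ℕ} (h₀ : fib p ≡ 0 [MOD m])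
    (h₁ : fib (p + 1) ≡ 1 [MOD m]) (n k : ℕ) : fib (n + p * k) ≡ fib n [MOD m] := by
  induction k with
  | zero => rfl
  | succ k ih =>
    rw [mul_add_one, ← add_assoc]
    exact (fib_add_modEq_of_period_s18 h₀ h₁ _).trans ih

end Nat

theorem u_modEq_of_fib_modEq {n : ℕ} {c m : ℤ} (h : (Nat.fib (3 * n) : ℤ) ≡ 2 * c [ZMOD 2 * m]) :
    u n ≡ c [ZMOD m] := by
  obtain ⟨t, ht⟩ := h.symm.dvd
  have hfib : (Nat.fib (3 * n) : ℤ) = 2 * (c + m * t) := by linear_combination ht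
  rw [u, hfib, Int.mul_ediv_cancel_left _ two_ne_zero]
  exact (Int.modEq_iff_dvd.mpr ⟨-t, by ring⟩)

set_option maxRecDepth 40000 in
theorem u_132_add_210_mul_modEq (k : ℕ) : u (132 + 210 * k) ≡ 12 [ZMOD 181] := by
  apply u_modEq_of_fib_modEq
  have hperiod : Nat.fib (396 + 630 * k) ≡ Nat.fib 396 [MOD 362] :=
    Nat.fib_add_mul_modEq_of_period_s18 (by decide) (by decide) 396 k
  rw [show 3 * (132 + 210 * k) = 396 + 630 * k by ring]
  exact_mod_cast hperiod.trans (by decide : Nat.fib 396 ≡ 24 [MOD 362])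

theorem pow_631_ne_zmod_181 (b : ℕ) : (631 : ZMod 181) ^ b ≠ 153 ∧ (631 : ZMod 181) ^ b ≠ -153 := by
  rw [pow_eq_pow_mod b (by decide : (631 : ZMod 181) ^ 36 = 1)]
  have hpowers : ∀ j < 36, (631 : ZMod 181) ^ j ≠ 153 ∧ (631 : ZMod 181) ^ j ≠ -153 := by decide
  exact hpowers _ (b.mod_lt (by norm_num))

/-- Case 4.22 of the proof of Theorem 1.3: for every integer
`x ≡ a (mod M)` and all `k, b ∈ ℕ`, `x² - u_{132+210k}` is not `±631^b`. -/
theorem sq_sub_u_ne_pm_pow_631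
    (x : ℤ)
    (hx : x ≡ 31207386885274502188173522132023665167365193670823768234185354856354918873864275
      [ZMOD 36812852443922071184402498913076070503146229820861211558347078871354783744850778])
    (k b : ℕ) :
    x ^ 2 - u (132 + 210 * k) ≠ 631 ^ b ∧ x ^ 2 - u (132 + 210 * k) ≠ -(631 ^ b) := by
  have hx181 : x ≡ 76 [ZMOD 181] := (hx.of_dvd (by norm_num)).trans (by decide)
  have hmod : x ^ 2 - u (132 + 210 * k) ≡ 153 [ZMOD 181] :=
    ((hx181.pow 2).sub (u_132_add_210_mul_modEq k)).trans (by decide)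
  have hcast : ((x ^ 2 - u (132 + 210 * k) : ℤ) : ZMod 181) = 153 := by
    exact_mod_cast (ZMod.intCast_eq_intCast_iff _ 153 181).mpr hmod
  obtain ⟨hne, hne_neg⟩ := pow_631_ne_zmod_181 b
  refine ⟨fun h => hne ?_, fun h => hne_neg ?_⟩
  · rw [h] at hcast
    exact_mod_cast hcast
  · rw [h] at hcast
    push_cast at hcast
    exact neg_eq_iff_eq_neg.mp hcast
end

section
/- Let a = 31207386885274502188173522132023665167365193670823768234185354856354918873864275 and M = 36812852443922071184402498913076070503146229820861211558347078871354783744850778, and for n ∈ ℕ set u_n = F_{3n}/2. Then for every integer x with x ≡ a (mod M) and all k, b ∈ ℕ, one has x² − u_{178+630k} ≠ 17011^b and x² − u_{178+630k} ≠ −17011^b. -/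
set_option maxRecDepth 40000

lemma fib_per (n : ℕ) : Nat.fib (n + 1890) ≡ Nat.fib n [MOD 58] := by
  have h : n + 1890 = 1889 + n + 1 := by omega
  rw [h, Nat.fib_add]
  have h1889 : Nat.fib 1889 ≡ 1 [MOD 58] := by decide
  have h1890 : Nat.fib 1890 ≡ 0 [MOD 58] := by decide
  calc Nat.fib 1889 * Nat.fib n + Nat.fib 1890 * Nat.fib (n + 1)
      ≡ 1 * Nat.fib n + 0 * Nat.fib (n + 1) [MOD 58] :=
        (h1889.mul_right _).add (h1890.mul_right _)
    _ = Nat.fib n := by ring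

lemma fib_const (k : ℕ) : Nat.fib (3 * (178 + 630 * k)) ≡ 30 [MOD 58] := by
  induction k with
  | zero => decide
  | succ k ih =>
      have h : 3 * (178 + 630 * (k + 1)) = 3 * (178 + 630 * k) + 1890 := by ring
      rw [h]
      exact (fib_per _).trans ih

lemma u_const (k : ℕ) : ∃ t : ℤ, u (178 + 630 * k) = 29 * t + 15 := by
  have h := fib_const k
  have h' : Nat.fib (3 * (178 + 630 * k)) % 58 = 30 := h
  obtain ⟨t, ht⟩ : ∃ t : ℕ, Nat.fib (3 * (178 + 630 * k)) = 58 * t + 30 :=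
    ⟨Nat.fib (3 * (178 + 630 * k)) / 58, by omega⟩
  refine ⟨(t : ℤ), ?_⟩
  unfold u
  rw [ht]
  push_cast
  omega

/-- Case 4.24 of the proof of Theorem 1.3: for every integer
`x ≡ a (mod M)` and all `k, b ∈ ℕ`, `x² - u_{178+630k}` is not `±17011^b`. -/
theorem sq_sub_u_ne_pm_pow_17011
    (x : ℤ)
    (hx : x ≡ 31207386885274502188173522132023665167365193670823768234185354856354918873864275
      [ZMOD 36812852443922071184402498913076070503146229820861211558347078871354783744850778])
    (k b : ℕ) :
    x ^ 2 - u (178 + 630 * k) ≠ 17011 ^ b ∧ x ^ 2 - u (178 + 630 * k) ≠ -(17011 ^ b) := by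
  have h29 : x ≡ 31207386885274502188173522132023665167365193670823768234185354856354918873864275
      [ZMOD 29] := hx.of_dvd (by norm_num)
  have hxz : (x : ZMod 29) =
      ((31207386885274502188173522132023665167365193670823768234185354856354918873864275 : ℤ) :
        ZMod 29) := (ZMod.intCast_eq_intCast_iff _ _ _).mpr h29
  have hxz5 : (x : ZMod 29) = 5 := by rw [hxz]; decide
  obtain ⟨t, ht⟩ := u_const k
  have huz : ((u (178 + 630 * k) : ℤ) : ZMod 29) = 15 := by
    rw [ht]; push_cast; simp [show (29 : ZMod 29) = 0 from by decide]
  have key : ∀ r : ℕ, r < 4 → ((x : ZMod 29) ^ 2 - ((u (178 + 630 * k) : ℤ) : ZMod 29)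
      ≠ (17 : ZMod 29) ^ r ∧ (x : ZMod 29) ^ 2 - ((u (178 + 630 * k) : ℤ) : ZMod 29)
      ≠ -((17 : ZMod 29) ^ r)) := by
    rw [hxz5, huz]
    decide
  have h17 : ((17011 : ℤ) : ZMod 29) = 17 := by decide
  have hord : (17 : ZMod 29) ^ 4 = 1 := by decide
  have hpow : (17 : ZMod 29) ^ b = (17 : ZMod 29) ^ (b % 4) := pow_eq_pow_mod b hord
  have hb4 : b % 4 < 4 := Nat.mod_lt _ (by norm_num)
  obtain ⟨k1, k2⟩ := key (b % 4) hb4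
  constructor
  · intro h
    apply k1
    have := congrArg (fun z : ℤ => (z : ZMod 29)) h
    simpa [h17, show (17011 : ZMod 29) = 17 from by decide, ← hpow] using this
  · intro h
    apply k2
    have := congrArg (fun z : ℤ => (z : ZMod 29)) h
    simpa [h17, show (17011 : ZMod 29) = 17 from by decide, ← hpow] using this
end
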